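/- arXiv:1904.04487 — 6 statements merged into one kernel-verified Lean document; each statement's English description precedes it below -/
import Mathlib

section
/- Let G be a finite abelian group and E a nonempty subset of G. Then there exists a subset B of the character group of G with |B| = |E| such that the restrictions to E of the characters in B form a basis of L²(E). -/
/-! The characters span `G → ℂ` and restriction to `E` is surjective, so the restricted
characters span `E → ℂ`; any finite spanning family contains a basis, and a basis of `E → ℂ`
has `|E|` elements. -/

open Submodule Set

theorem exists_finset_linearIndependent_span_eq_top {K V ι : Type*} [DivisionRing K]
    [AddCommGroup V] [Module K V] [Finite ι] {v : ι → V} (hv : span K (range v) = ⊤) :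
    ∃ s : Finset ι, LinearIndependent K (fun i : s => v i) ∧
      span K (range fun i : s => v i) = ⊤ := by
  obtain ⟨b, -, -, hspan, hli⟩ :=
    exists_linearIndepOn_extension (linearIndepOn_empty K v) (empty_subset univ)
  lift b to Finset ι using b.toFinite
  refine ⟨b, hli, eq_top_iff.2 ?_⟩
  rw [image_univ, image_eq_range] at hspan
  rw [← hv]
  exact span_le.2 hspan

theorem span_range_restrict_eq_top {R M ι α : Type*} [Semiring R] [AddCommMonoid M]
    [Module R M] {v : ι → α → M} (hv : span R (range v) = ⊤) (s : Set α) :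
    span R (range fun i (x : s) => v i x) = ⊤ := by
  let restrict := LinearMap.funLeft R M ((↑) : s → α)
  change span R (range (restrict ∘ v)) = ⊤
  rw [range_comp, ← map_span, hv, Submodule.map_top, LinearMap.range_eq_top]
  exact LinearMap.funLeft_surjective_of_injective R M _ Subtype.val_injective

theorem stmt_1_general {G : Type*} [AddCommGroup G] [Fintype G]
    (E : Finset G) :
    ∃ B : Finset (AddChar G ℂ), B.card = E.card ∧
      LinearIndependent ℂ (fun χ : B => fun x : E => χ.1 x.1) ∧
      Submodule.span ℂ (Set.range (fun χ : B => fun x : E => χ.1 x.1)) = ⊤ := by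
  have hchar : span ℂ (range ((⇑) : AddChar G ℂ → G → ℂ)) = ⊤ := by
    rw [← AddChar.coe_complexBasis, Module.Basis.span_eq]
  obtain ⟨B, hli, hspan⟩ :=
    exists_finset_linearIndependent_span_eq_top (span_range_restrict_eq_top hchar (E : Set G))
  refine ⟨B, ?_, hli, hspan⟩
  have hrank := finrank_span_eq_card hli
  rw [hspan, finrank_top, Module.finrank_fintype_fun_eq_card] at hrank
  simpa using hrank.symm

theorem stmt_1 {G : Type*} [AddCommGroup G] [Fintype G]
    (E : Finset G) (hE : E.Nonempty) :
    ∃ B : Finset (AddChar G ℂ), B.card = E.card ∧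
      LinearIndependent ℂ (fun χ : B => fun x : E => χ.1 x.1) ∧
      Submodule.span ℂ (Set.range (fun χ : B => fun x : E => χ.1 x.1)) = ⊤ :=
  stmt_1_general E
end

section
/- A nonzero sum of N roots of unity, each a 2m-th root of unity, has absolute value at least N^(1−φ(m)). -/
/-!
Write the roots as `ω ^ aᵢ` for a primitive `2m`-th root of unity `ω`, so that the sum is a
conjugate of the algebraic integer `z = ∑ ζ ^ aᵢ` of `K = ℚ(ζ)`, `[K : ℚ] = φ(2m)`. Every
archimedean absolute value of `z` is at most `N`, while its norm is a nonzero integer; by the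
product formula `1 ≤ ‖∑ fᵢ‖ ^ μ * N ^ (φ(2m) - μ)`, where `μ` is the multiplicity of the place. For
`m` even the field is totally complex (`μ = 2`) and `φ(2m) = 2 φ(m)`; for `m` odd
`φ(2m) = φ(m)`. Either way `‖∑ fᵢ‖ ≥ N ^ (1 - φ(m))`.
-/

open Finset Module NumberField InfinitePlace Nat

theorem one_le_mul_pow_sub_one_of_one_le_pow_mul_pow {R : Type*} [CommSemiring R] [LinearOrder R]
    [IsStrictOrderedRing R] {x B : R} {μ d k : ℕ} (hx : 0 ≤ x) (hB : 1 ≤ B) (hμ : μ ≠ 0)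
    (hd : d ≤ μ * k) (h : 1 ≤ x ^ μ * B ^ (d - μ)) : 1 ≤ x * B ^ (k - 1) := by
  rw [← one_le_pow_iff_of_nonneg (by positivity) hμ, mul_pow, ← pow_mul, mul_comm (k - 1),
    Nat.mul_sub_one]
  exact h.trans <| by gcongr

namespace NumberField.InfinitePlace

variable {K : Type*} [Field K]

theorem apply_sum_le_card (w : InfinitePlace K) {ι : Type*} [Fintype ι] {x : ι → K} {n : ℕ}
    (hn : n ≠ 0) (hx : ∀ i, x i ^ n = 1) : w (∑ i, x i) ≤ Fintype.card ι := by
  have hw : ∀ i, w (x i) = 1 := fun i =>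
    (pow_eq_one_iff_of_nonneg (apply_nonneg w _) hn).mp (by rw [← map_pow, hx, map_one])
  calc w (∑ i, x i) ≤ ∑ i, w (x i) := w.1.sum_le univ x
    _ = Fintype.card ι := by simp [hw]

/-- The norm of `x` is a nonzero integer, and it equals `∏ w, w x ^ mult w`. -/
theorem one_le_pow_mult_mul_pow_of_forall_le [NumberField K] {x : 𝓞 K} (hx : x ≠ 0) {B : ℝ}
    (hB : ∀ w : InfinitePlace K, w x ≤ B) (v : InfinitePlace K) :
    1 ≤ v x ^ v.mult * B ^ (finrank ℚ K - v.mult) := by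
  classical
  calc (1 : ℝ) ≤ ((|Algebra.norm ℚ (x : K)| : ℚ) : ℝ) := by
        rw [← Algebra.coe_norm_int]
        exact_mod_cast Int.one_le_abs (Algebra.norm_ne_zero_iff.mpr hx)
    _ = v x ^ v.mult * ∏ w ∈ univ.erase v, w x ^ w.mult := by
        rw [← prod_eq_abs_norm, ← mul_prod_erase _ _ (mem_univ v)]
    _ ≤ v x ^ v.mult * ∏ w ∈ univ.erase v, B ^ w.mult := by
        gcongr with w
        exact hB w
    _ = v x ^ v.mult * B ^ (finrank ℚ K - v.mult) := by
        rw [prod_pow_eq_pow_sum, ← sum_mult_eq, ← add_sum_erase _ _ (mem_univ v),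
          Nat.add_sub_cancel_left]

end NumberField.InfinitePlace

theorem Complex.exists_one_le_norm_sum_pow_mul_card_pow {ι : Type*} [Fintype ι] {n : ℕ}
    [NeZero n] {f : ι → ℂ} (hf : ∀ i, f i ^ n = 1) (hs : ∑ i, f i ≠ 0) :
    ∃ μ : ℕ, μ ≠ 0 ∧ (2 < n → μ = 2) ∧
      1 ≤ ‖∑ i, f i‖ ^ μ * (Fintype.card ι : ℝ) ^ (φ n - μ) := by
  let K := CyclotomicField n ℚ
  have : IsCyclotomicExtension {n} ℚ K := CyclotomicField.isCyclotomicExtension n ℚ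
  let ζ := IsCyclotomicExtension.zeta n ℚ K
  have hζ : IsPrimitiveRoot ζ n := IsCyclotomicExtension.zeta_spec n ℚ K
  let v : InfinitePlace K := Classical.arbitrary _
  have hω := hζ.map_of_injective v.embedding.injective
  choose a _ ha using fun i => hω.eq_pow_of_pow_eq_one (hf i)
  let z : K := ∑ i, ζ ^ a i
  have hz : IsIntegral ℤ z := IsIntegral.sum _ fun i _ => (hζ.isIntegral (NeZero.pos n)).pow _
  have hvz : v.embedding z = ∑ i, f i := by simp [z, ha]
  have hz0 : (⟨z, hz⟩ : 𝓞 K) ≠ 0 := fun h => hs <| by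
    rw [← hvz, show z = 0 from congrArg Subtype.val h, map_zero]
  have hζa : ∀ i, (ζ ^ a i) ^ n = 1 := fun i => by
    rw [← pow_mul, mul_comm, pow_mul, hζ.pow_eq_one, one_pow]
  have hbound : 1 ≤ v z ^ v.mult * (Fintype.card ι : ℝ) ^ (finrank ℚ K - v.mult) :=
    one_le_pow_mult_mul_pow_of_forall_le hz0
      (fun w => w.apply_sum_le_card (NeZero.ne n) hζa) v
  refine ⟨v.mult, mult_ne_zero,
    fun hn => (IsCyclotomicExtension.Rat.isTotallyComplex K hn).mult_eq v, ?_⟩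
  rwa [IsCyclotomicExtension.finrank K (Polynomial.cyclotomic.irreducible_rat (NeZero.pos n)),
    ← norm_embedding_eq, hvz] at hbound

theorem stmt_10 {m N : ℕ} (hm : 0 < m) (f : Fin N → ℂ)
    (hf : ∀ i, f i ^ (2 * m) = 1) (hsum : ∑ i, f i ≠ 0) :
    (N : ℝ) ^ ((1 : ℤ) - (Nat.totient m : ℤ)) ≤ ‖∑ i, f i‖ := by
  have hN : 0 < N := Nat.pos_of_ne_zero fun h => hsum (by subst h; simp)
  have : NeZero (2 * m) := ⟨by omega⟩
  obtain ⟨μ, hμ, hμ2, hbound⟩ := Complex.exists_one_le_norm_sum_pow_mul_card_pow hf hsum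
  have htot : φ (2 * m) ≤ μ * φ m := by
    rcases m.even_or_odd with hm' | hm'
    · rw [totient_two_mul_of_even hm', hμ2 (by obtain ⟨k, rfl⟩ := hm'; omega)]
    · rw [totient_two_mul_of_odd hm']
      exact Nat.le_mul_of_pos_left _ (Nat.pos_of_ne_zero hμ)
  rw [Fintype.card_fin] at hbound
  have hnorm := one_le_mul_pow_sub_one_of_one_le_pow_mul_pow (norm_nonneg _)
    (by exact_mod_cast hN) hμ htot hbound
  rw [show (1 : ℤ) - φ m = -((φ m - 1 : ℕ) : ℤ) by have := totient_pos.mpr hm; omega, zpow_neg,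
    zpow_natCast, inv_le_iff_one_le_mul₀ (by positivity)]
  exact hnorm
end

section
/- Let n > 1 and let σ_1 ≤ ... ≤ σ_n be positive reals with σ_1² + ... + σ_n² = n². Let ρ = σ_n²/σ_1² and D = σ_1σ_2⋯σ_n. Then D ≤ (2√ρ/(ρ+1))·n^(n/2). Consequently ρ < 4n^n/D². -/
/-! Replacing the two extreme squares `σ₁²` and `σₙ²` by their mean keeps the sum of squares
and multiplies `D²` by `(σ₁² + σₙ²)² / (4 σ₁² σₙ²) = (ρ + 1)² / (4ρ)`; by AM-GM the new product
of squares is at most `(n² / n)ⁿ = nⁿ`. Hence `D² ≤ 4ρ / (ρ + 1)² · nⁿ`, which gives both bounds. -/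

open Finset

namespace Real

theorem prod_le_arith_mean_pow_card {ι : Type*} (s : Finset ι) (z : ι → ℝ)
    (hz : ∀ i ∈ s, 0 ≤ z i) : ∏ i ∈ s, z i ≤ ((∑ i ∈ s, z i) / #s) ^ #s := by
  rcases s.eq_empty_or_nonempty with rfl | hs
  · simp
  have hcard : (0 : ℝ) < #s := by exact_mod_cast hs.card_pos
  have hP : 0 ≤ ∏ i ∈ s, z i := prod_nonneg hz
  have amgm := geom_mean_le_arith_mean s (fun _ => 1) z (fun _ _ => zero_le_one)
    (by simpa using hcard) hz
  simp only [rpow_one, one_mul, sum_const, nsmul_eq_mul, mul_one] at amgm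
  calc ∏ i ∈ s, z i = ((∏ i ∈ s, z i) ^ ((#s : ℝ)⁻¹)) ^ #s := by
        rw [← rpow_natCast, ← rpow_mul hP, inv_mul_cancel₀ hcard.ne', rpow_one]
    _ ≤ ((∑ i ∈ s, z i) / #s) ^ #s := by gcongr

end Real

theorem prod_mul_sq_add_le {ι : Type*} [Fintype ι] [DecidableEq ι] (x : ι → ℝ)
    (hx : ∀ k, 0 ≤ x k) {i j : ι} (hij : i ≠ j) :
    (∏ k, x k) * (x i + x j) ^ 2
      ≤ 4 * x i * x j * ((∑ k, x k) / Fintype.card ι) ^ Fintype.card ι := by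
  set m := (x i + x j) / 2
  set y := Function.update (Function.update x j m) i m
  have hj : j ∈ (univ : Finset ι).erase i := mem_erase.2 ⟨hij.symm, mem_univ j⟩
  set rest := (univ.erase i).erase j
  have hxsum : ∑ k, x k = x i + (x j + ∑ k ∈ rest, x k) := by
    rw [← add_sum_erase _ x (mem_univ i), ← add_sum_erase _ x hj]
  have hxprod : ∏ k, x k = x i * (x j * ∏ k ∈ rest, x k) := by
    rw [← mul_prod_erase _ x (mem_univ i), ← mul_prod_erase _ x hj]
  have hysum : ∑ k, y k = m + (m + ∑ k ∈ rest, x k) := by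
    rw [sum_update_of_mem (mem_univ i), sdiff_singleton_eq_erase,
      sum_update_of_mem hj, sdiff_singleton_eq_erase]
  have hyprod : ∏ k, y k = m * (m * ∏ k ∈ rest, x k) := by
    rw [prod_update_of_mem (mem_univ i), sdiff_singleton_eq_erase,
      prod_update_of_mem hj, sdiff_singleton_eq_erase]
  have hm : 0 ≤ m := div_nonneg (add_nonneg (hx i) (hx j)) zero_le_two
  have hy : ∀ k, 0 ≤ y k := by
    intro k
    simp only [y, Function.update_apply]
    split_ifs
    exacts [hm, hm, hx k]
  have amgm := Real.prod_le_arith_mean_pow_card univ y fun k _ => hy k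
  rw [card_univ, hysum, hyprod, show m + (m + ∑ k ∈ rest, x k) = ∑ k, x k by
    rw [hxsum]; ring] at amgm
  calc (∏ k, x k) * (x i + x j) ^ 2 = 4 * x i * x j * (m * (m * ∏ k ∈ rest, x k)) := by
        rw [hxprod]; ring
    _ ≤ _ := mul_le_mul_of_nonneg_left amgm (mul_nonneg (mul_nonneg zero_le_four (hx i)) (hx j))

theorem four_mul_div_add_one_sq_eq {a b : ℝ} (ha : a ≠ 0) :
    4 * (b / a) / (b / a + 1) ^ 2 = 4 * a * b / (a + b) ^ 2 := by
  rw [div_add_one ha, add_comm b a, div_pow, div_div_eq_mul_div]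
  field_simp

section RatioBound

variable {ρ N D : ℝ}

theorem le_two_mul_sqrt_div_mul_sqrt_of_sq_le (hρ : 0 ≤ ρ) (hN : 0 ≤ N) (hD : 0 ≤ D)
    (h : D ^ 2 ≤ 4 * ρ / (ρ + 1) ^ 2 * N) : D ≤ 2 * √ρ / (ρ + 1) * √N := by
  rw [← pow_le_pow_iff_left₀ hD (by positivity) two_ne_zero, mul_pow, div_pow, mul_pow,
    Real.sq_sqrt hρ, Real.sq_sqrt hN]
  linarith

theorem lt_div_sq_of_sq_le (hρ : 0 ≤ ρ) (hD : 0 < D) (h : D ^ 2 ≤ 4 * ρ / (ρ + 1) ^ 2 * N) :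
    ρ < 4 * N / D ^ 2 := by
  have hN : 0 < N := by
    by_contra! hN
    nlinarith [mul_nonpos_of_nonneg_of_nonpos (by positivity : 0 ≤ 4 * ρ / (ρ + 1) ^ 2) hN]
  rw [lt_div_iff₀ (by positivity)]
  calc ρ * D ^ 2 ≤ ρ * (4 * ρ / (ρ + 1) ^ 2 * N) := by gcongr
    _ = (2 * ρ / (ρ + 1)) ^ 2 * N := by field_simp; ring
    _ < 2 ^ 2 * N := by
        gcongr
        rw [div_lt_iff₀ (by positivity)]
        linarith
    _ = 4 * N := by norm_num

end RatioBound

theorem stmt_12 {n : ℕ} (hn : 1 < n) (σ : Fin n → ℝ)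
    (hpos : ∀ i, 0 < σ i)
    (hsum : ∑ i, σ i ^ 2 = (n : ℝ) ^ 2) :
    (∏ i, σ i) ≤ (2 * Real.sqrt (σ ⟨n - 1, by omega⟩ ^ 2 / σ ⟨0, by omega⟩ ^ 2) /
        (σ ⟨n - 1, by omega⟩ ^ 2 / σ ⟨0, by omega⟩ ^ 2 + 1)) * (n : ℝ) ^ ((n : ℝ) / 2) ∧
      σ ⟨n - 1, by omega⟩ ^ 2 / σ ⟨0, by omega⟩ ^ 2 <
        4 * (n : ℝ) ^ n / (∏ i, σ i) ^ 2 := by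
  set a := σ ⟨0, by omega⟩ ^ 2
  set b := σ ⟨n - 1, by omega⟩ ^ 2
  have hn0 : (0 : ℝ) < n := by positivity
  have ha : 0 < a := pow_pos (hpos _) 2
  have hb : 0 < b := pow_pos (hpos _) 2
  have hsmooth := prod_mul_sq_add_le (fun k => σ k ^ 2) (fun k => sq_nonneg (σ k))
    (i := ⟨0, by omega⟩) (j := ⟨n - 1, by omega⟩) (by simp [Fin.ext_iff]; omega)
  rw [prod_pow, hsum, Fintype.card_fin, sq (n : ℝ), mul_div_cancel_right₀ _ hn0.ne'] at hsmooth
  have hD2 : (∏ i, σ i) ^ 2 ≤ 4 * (b / a) / (b / a + 1) ^ 2 * (n : ℝ) ^ n := by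
    rw [four_mul_div_add_one_sq_eq ha.ne', div_mul_eq_mul_div,
      le_div_iff₀ (by positivity)]
    exact hsmooth
  have hsqrt : (n : ℝ) ^ ((n : ℝ) / 2) = √((n : ℝ) ^ n) := by
    rw [Real.sqrt_eq_rpow, ← Real.rpow_natCast, ← Real.rpow_mul hn0.le, mul_one_div]
  rw [hsqrt]
  have hρ : 0 ≤ b / a := (div_pos hb ha).le
  have hD : 0 < ∏ i, σ i := prod_pos fun i _ => hpos i
  exact ⟨le_two_mul_sqrt_div_mul_sqrt_of_sq_le hρ (by positivity) hD.le hD2,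
    lt_div_sq_of_sq_le hρ hD hD2⟩
end

section
/- Let G be a finite abelian group with minimal exponent M, E ⊆ G with |E| = n > 1, and B ⊆ Ĝ such that the Fourier matrix T(E,B) is invertible. Then there exists 1 ≤ k ≤ M with gcd(k,M) = 1 such that |det T(E,kB)| ≥ 1, and for this k the squared condition number of T(E,kB) is less than 4n^n. -/
/-!
Every entry of `T(E, kB)` is a power `ω ^ (k a_ij)` of one primitive `M`-th root of unity `ω`, so
`det T(E, kB) = P(ω ^ k)` for a single `P ∈ ℤ[X]`. As `P(ω) ≠ 0`, it is a nonzero algebraic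
integer of `ℚ(ω)` and so has a conjugate of modulus at least `1`; its conjugates are the values
`P(ω ^ k)` with `k` coprime to `M`.

For that `k`, let `λ_i` be the eigenvalues of `Tᴴ T`, the squared singular values of
`T = T(E, kB)`. They sum to `tr (Tᴴ T) = n²` because the entries of `T` are unimodular, and their
product is `|det T|² ≥ 1`. The squared condition number is
`λ_max / λ_min ≤ λ_max ∏_{i ≠ min} λ_i`, and AM-GM, applied after splitting `λ_max` into two
halves, bounds this by `4 n^n`.
-/

/-- The Fourier matrix of an equal-size pair `(E, B)` in a finite abelian group:
its `(i,j)` entry is `b_j(e_i)`. -/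
noncomputable def charMatrix {G : Type*} [AddCommGroup G] {n : ℕ}
    (E : Fin n → G) (B : Fin n → AddChar G ℂ) : Matrix (Fin n) (Fin n) ℂ :=
  Matrix.of fun i j => B j (E i)

/-- The operator (spectral) norm of a matrix. -/
noncomputable def opNorm {ι : Type*} [Fintype ι] [DecidableEq ι]
    (T : Matrix ι ι ℂ) : ℝ :=
  ‖Matrix.toEuclideanCLM (𝕜 := ℂ) T‖

open Polynomial NumberField Finset Matrix

theorem IsPrimitiveRoot.exists_coprime_pow_eq {R : Type*} [CommRing R] [IsDomain R] {ζ ξ : R}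
    {M : ℕ} (hM : 0 < M) (hζ : IsPrimitiveRoot ζ M) (hξ : IsPrimitiveRoot ξ M) :
    ∃ k, 1 ≤ k ∧ k ≤ M ∧ k.Coprime M ∧ ζ ^ k = ξ := by
  have : NeZero M := ⟨hM.ne'⟩
  obtain ⟨k, hkM, hk, rfl⟩ := hζ.isPrimitiveRoot_iff.mp hξ
  rcases Nat.eq_zero_or_pos k with rfl | hk0
  · obtain rfl : M = 1 := Nat.coprime_zero_left M |>.mp hk
    exact ⟨1, le_rfl, le_rfl, Nat.coprime_one_left 1, by simpa using hζ.pow_eq_one⟩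
  · exact ⟨k, hk0, hkM.le, hk, rfl⟩

theorem IsPrimitiveRoot.exists_one_le_norm_aeval_pow {ζ : ℂ} {M : ℕ} (hM : 0 < M)
    (hζ : IsPrimitiveRoot ζ M) {P : ℤ[X]} (hP : aeval ζ P ≠ 0) :
    ∃ k, 1 ≤ k ∧ k ≤ M ∧ k.Coprime M ∧ 1 ≤ ‖aeval (ζ ^ k) P‖ := by
  have : NeZero M := ⟨hM.ne'⟩
  let K := CyclotomicField M ℚ
  have : IsCyclotomicExtension {M} ℚ K := CyclotomicField.isCyclotomicExtension M ℚ
  have hη := IsCyclotomicExtension.zeta_spec M ℚ K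
  set η := IsCyclotomicExtension.zeta M ℚ K
  let e := hη.embeddingsEquivPrimitiveRoots ℂ (cyclotomic.irreducible_rat hM)
  let ι := e.symm ⟨ζ, (mem_primitiveRoots hM).2 hζ⟩
  have hι : ι η = ζ := by
    rw [← hη.embeddingsEquivPrimitiveRoots_apply_coe ℂ (cyclotomic.irreducible_rat hM),
      Equiv.apply_symm_apply]
  have hmap : ∀ σ : K →+* ℂ, σ (aeval η P) = aeval (σ η) P := fun σ =>
    (aeval_algHom_apply σ.toIntAlgHom η P).symm
  let α : 𝓞 K := aeval (⟨η, hη.isIntegral hM⟩ : 𝓞 K) P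
  have hα : (α : K) = aeval η P :=
    (aeval_algHom_apply (Algebra.ofId (𝓞 K) K |>.restrictScalars ℤ) _ P).symm
  have hα0 : α ≠ 0 := fun h => hP (by simpa [← hα, h, hι] using (hmap ι).symm)
  obtain ⟨σ, hσ⟩ := exists_conjugate_one_le_norm hα0
  obtain ⟨k, hk1, hkM, hkcop, hk⟩ := hζ.exists_coprime_pow_eq hM (hη.map_of_injective σ.injective)
  exact ⟨k, hk1, hkM, hkcop, by rwa [hk, ← hmap, ← hα]⟩

theorem exists_det_charMatrix_pow_eq_aeval {G : Type*} [AddCommGroup G] [Fintype G] {n : ℕ}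
    (E : Fin n → G) (B : Fin n → AddChar G ℂ) {ζ : ℂ}
    (hζ : IsPrimitiveRoot ζ (AddMonoid.exponent G)) :
    ∃ P : ℤ[X], ∀ k, aeval (ζ ^ k) P = (charMatrix E fun j => B j ^ k).det := by
  have : NeZero (AddMonoid.exponent G) := ⟨AddMonoid.exponent_ne_zero_of_finite⟩
  choose a ha using fun i j => hζ.eq_pow_of_pow_eq_one (ξ := B j (E i)) <| by
    rw [← AddChar.map_nsmul_eq_pow, AddMonoid.exponent_nsmul_eq_zero, AddChar.map_zero_eq_one]
  refine ⟨(of fun i j => (X : ℤ[X]) ^ a i j).det, fun k => ?_⟩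
  rw [AlgHom.map_det]
  congr 1
  ext i j
  simp [charMatrix, ← (ha i j).2, ← pow_mul, mul_comm]

theorem Real.prod_le_arith_mean_pow {ι : Type*} (s : Finset ι) {f : ι → ℝ}
    (hf : ∀ i ∈ s, 0 ≤ f i) : ∏ i ∈ s, f i ≤ ((∑ i ∈ s, f i) / #s) ^ #s := by
  rcases s.eq_empty_or_nonempty with rfl | hs
  · simp
  have hcard : (0 : ℝ) < #s := by exact_mod_cast hs.card_pos
  have hgm := Real.geom_mean_le_arith_mean_weighted s (fun _ => (#s : ℝ)⁻¹) f
    (fun _ _ => by positivity) (by simp [hcard.ne']) hf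
  rw [Real.finsetProd_rpow s f hf, ← Finset.mul_sum, inv_mul_eq_div] at hgm
  calc ∏ i ∈ s, f i = ((∏ i ∈ s, f i) ^ (#s : ℝ)⁻¹) ^ #s := by
        rw [← Real.rpow_natCast, ← Real.rpow_mul (prod_nonneg hf), inv_mul_cancel₀ hcard.ne',
          Real.rpow_one]
    _ ≤ ((∑ i ∈ s, f i) / #s) ^ #s := by gcongr; exact Real.rpow_nonneg (prod_nonneg hf) _

theorem div_lt_four_mul_card_pow {ι : Type*} [Fintype ι] [DecidableEq ι] {l : ι → ℝ}
    (hl : ∀ i, 0 < l i) (hsum : ∑ i, l i = (Fintype.card ι : ℝ) ^ 2) (hprod : 1 ≤ ∏ i, l i)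
    (i j : ι) : l j / l i < 4 * (Fintype.card ι : ℝ) ^ Fintype.card ι := by
  set n := Fintype.card ι
  have hn : 0 < n := Fintype.card_pos_iff.mpr ⟨i⟩
  have hn' : (0 : ℝ) < n := Nat.cast_pos.mpr hn
  rcases eq_or_ne i j with rfl | hij
  · rw [div_self (hl i).ne']
    have : (1 : ℝ) ≤ n ^ n := one_le_pow₀ (Nat.one_le_cast.mpr hn)
    linarith
  -- Replacing `l i` and `l j` by two copies of `l j / 2` gives a family `μ` with
  -- `l j / l i ≤ 4 ∏ μ` and `∑ μ = n² - l i < n²`, to which AM-GM applies.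
  set s : Finset ι := {i, j}
  set μ : ι → ℝ := s.piecewise (fun _ => l j / 2) l
  have hprod_l : ∏ k, l k = l i * l j * ∏ k ∈ sᶜ, l k := by
    rw [← prod_mul_prod_compl s, prod_pair hij]
  have hprod_μ : ∏ k, μ k = l j / 2 * (l j / 2) * ∏ k ∈ sᶜ, l k := by
    rw [prod_piecewise, univ_inter, prod_const, card_pair hij, ← compl_eq_univ_sdiff]
    ring
  have hsum_μ : ∑ k, μ k = n ^ 2 - l i := by
    rw [← hsum, sum_piecewise, univ_inter, sum_const, card_pair hij, ← compl_eq_univ_sdiff,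
      ← sum_add_sum_compl s, sum_pair hij]
    ring
  have hμ : ∀ k ∈ univ, 0 ≤ μ k := fun k _ =>
    s.piecewise_cases (fun _ => l j / 2) l (fun x : ℝ => 0 ≤ x) (half_pos (hl j)).le (hl k).le
  have hli : l i ≤ n ^ 2 := hsum ▸ single_le_sum (fun k _ => (hl k).le) (mem_univ i)
  have hmean : (n ^ 2 - l i) / n < n := by
    rw [div_lt_iff₀ hn']
    nlinarith [hl i]
  calc l j / l i ≤ 4 * ∏ k, μ k := by
        rw [div_le_iff₀ (hl i), hprod_μ]
        nlinarith [hl j, hprod_l, hprod]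
    _ ≤ 4 * ((n ^ 2 - l i) / n) ^ n := by
        have := Real.prod_le_arith_mean_pow univ hμ
        rw [hsum_μ, card_univ] at this
        linarith
    _ < 4 * n ^ n := by
        gcongr 4 * ?_
        exact pow_lt_pow_left₀ hmean (div_nonneg (by linarith) hn'.le) hn.ne'

theorem ContinuousLinearMap.sq_opNorm_le_of_sq_norm_apply_le {𝕜 E F : Type*}
    [NontriviallyNormedField 𝕜] [SeminormedAddCommGroup E] [SeminormedAddCommGroup F]
    [NormedSpace 𝕜 E] [NormedSpace 𝕜 F] {S : E →L[𝕜] F} {C : ℝ} (hC : 0 ≤ C)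
    (hS : ∀ x, ‖S x‖ ^ 2 ≤ C * ‖x‖ ^ 2) : ‖S‖ ^ 2 ≤ C := by
  have : ‖S‖ ≤ √C := by
    refine S.opNorm_le_bound (Real.sqrt_nonneg C) fun x => ?_
    refine (sq_le_sq₀ (norm_nonneg _) (by positivity)).mp ?_
    rw [mul_pow, Real.sq_sqrt hC]
    exact hS x
  calc ‖S‖ ^ 2 ≤ √C ^ 2 := by gcongr
    _ = C := Real.sq_sqrt hC

namespace Matrix

variable {𝕜 ι : Type*} [RCLike 𝕜] [Fintype ι] [DecidableEq ι]

theorem IsHermitian.toEuclideanCLM_eigenvectorBasis {A : Matrix ι ι 𝕜} (hA : A.IsHermitian)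
    (i : ι) :
    toEuclideanCLM (𝕜 := 𝕜) A (hA.eigenvectorBasis i) =
      (hA.eigenvalues i : 𝕜) • hA.eigenvectorBasis i := by
  ext j
  have := congrFun (hA.mulVec_eigenvectorBasis i) j
  simp only [ofLp_toEuclideanCLM, PiLp.smul_apply] at this ⊢
  rw [this, Pi.smul_apply, RCLike.real_smul_eq_coe_smul (K := 𝕜)]

theorem IsHermitian.re_inner_toEuclideanCLM_apply_self {A : Matrix ι ι 𝕜} (hA : A.IsHermitian)
    (x : EuclideanSpace 𝕜 ι) :
    RCLike.re (inner 𝕜 (toEuclideanCLM (𝕜 := 𝕜) A x) x) =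
      ∑ i, hA.eigenvalues i * ‖inner 𝕜 (hA.eigenvectorBasis i) x‖ ^ 2 := by
  have hS : IsSelfAdjoint (toEuclideanCLM (𝕜 := 𝕜) A) := hA.isSelfAdjoint.map _
  rw [← hA.eigenvectorBasis.sum_inner_mul_inner, map_sum]
  refine Finset.sum_congr rfl fun i _ => ?_
  rw [← ContinuousLinearMap.coe_coe, hS.isSymmetric, ContinuousLinearMap.coe_coe,
    hA.toEuclideanCLM_eigenvectorBasis, inner_smul_right, ← inner_conj_symm, mul_assoc,
    RCLike.conj_mul, ← RCLike.ofReal_pow, ← RCLike.ofReal_mul, RCLike.ofReal_re]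

noncomputable def sqSingularValues (T : Matrix ι ι 𝕜) : ι → ℝ :=
  (isHermitian_conjTranspose_mul_self T).eigenvalues

variable (T : Matrix ι ι 𝕜)

theorem sqSingularValues_nonneg (i : ι) : 0 ≤ T.sqSingularValues i :=
  eigenvalues_conjTranspose_mul_self_nonneg T i

theorem sum_sqSingularValues : ∑ i, T.sqSingularValues i = ∑ i, ∑ j, ‖T i j‖ ^ 2 := by
  apply RCLike.ofReal_injective (K := 𝕜)
  rw [RCLike.ofReal_sum, sqSingularValues,
    ← (isHermitian_conjTranspose_mul_self T).trace_eq_sum_eigenvalues, Finset.sum_comm]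
  simp [trace, mul_apply, RCLike.conj_mul]

theorem prod_sqSingularValues : ∏ i, T.sqSingularValues i = ‖T.det‖ ^ 2 := by
  apply RCLike.ofReal_injective (K := 𝕜)
  rw [RCLike.ofReal_prod, sqSingularValues,
    ← (isHermitian_conjTranspose_mul_self T).det_eq_prod_eigenvalues, det_mul, det_conjTranspose,
    RCLike.star_def, RCLike.conj_mul, RCLike.ofReal_pow]

theorem sq_norm_toEuclideanCLM_apply (x : EuclideanSpace 𝕜 ι) :
    ‖toEuclideanCLM (𝕜 := 𝕜) T x‖ ^ 2 = ∑ i, T.sqSingularValues i *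
      ‖inner 𝕜 ((isHermitian_conjTranspose_mul_self T).eigenvectorBasis i) x‖ ^ 2 := by
  have hTT : toEuclideanCLM (𝕜 := 𝕜) (Tᴴ * T) =
      (toEuclideanCLM (𝕜 := 𝕜) T).adjoint ∘L toEuclideanCLM (𝕜 := 𝕜) T := by
    rw [map_mul, ← star_eq_conjTranspose, map_star, ContinuousLinearMap.star_eq_adjoint]
    rfl
  rw [ContinuousLinearMap.apply_norm_sq_eq_inner_adjoint_left, ← hTT]
  exact (isHermitian_conjTranspose_mul_self T).re_inner_toEuclideanCLM_apply_self x

theorem sq_norm_toEuclideanCLM_apply_le {C : ℝ} (hC : ∀ i, T.sqSingularValues i ≤ C)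
    (x : EuclideanSpace 𝕜 ι) : ‖toEuclideanCLM (𝕜 := 𝕜) T x‖ ^ 2 ≤ C * ‖x‖ ^ 2 := by
  rw [sq_norm_toEuclideanCLM_apply, ← OrthonormalBasis.sum_sq_norm_inner_right
    (isHermitian_conjTranspose_mul_self T).eigenvectorBasis x, Finset.mul_sum]
  gcongr with i
  exact hC i

theorem le_sq_norm_toEuclideanCLM_apply {c : ℝ} (hc : ∀ i, c ≤ T.sqSingularValues i)
    (x : EuclideanSpace 𝕜 ι) : c * ‖x‖ ^ 2 ≤ ‖toEuclideanCLM (𝕜 := 𝕜) T x‖ ^ 2 := by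
  rw [sq_norm_toEuclideanCLM_apply, ← OrthonormalBasis.sum_sq_norm_inner_right
    (isHermitian_conjTranspose_mul_self T).eigenvectorBasis x, Finset.mul_sum]
  gcongr with i
  exact hc i

theorem sq_norm_toEuclideanCLM_le {C : ℝ} (hC₀ : 0 ≤ C) (hC : ∀ i, T.sqSingularValues i ≤ C) :
    ‖toEuclideanCLM (𝕜 := 𝕜) T‖ ^ 2 ≤ C :=
  ContinuousLinearMap.sq_opNorm_le_of_sq_norm_apply_le hC₀ (T.sq_norm_toEuclideanCLM_apply_le hC)

theorem sq_norm_toEuclideanCLM_inv_le (hT : IsUnit T.det) {c : ℝ} (hc₀ : 0 < c)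
    (hc : ∀ i, c ≤ T.sqSingularValues i) : ‖toEuclideanCLM (𝕜 := 𝕜) T⁻¹‖ ^ 2 ≤ c⁻¹ := by
  refine ContinuousLinearMap.sq_opNorm_le_of_sq_norm_apply_le (inv_nonneg.mpr hc₀.le) fun x => ?_
  have hx : toEuclideanCLM (𝕜 := 𝕜) T (toEuclideanCLM (𝕜 := 𝕜) T⁻¹ x) = x := by
    rw [← mul_apply_eq_comp, ← map_mul, mul_nonsing_inv T hT, map_one, one_apply_eq_self]
  rw [inv_mul_eq_div, le_div_iff₀' hc₀]
  simpa only [hx] using T.le_sq_norm_toEuclideanCLM_apply hc (toEuclideanCLM (𝕜 := 𝕜) T⁻¹ x)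

end Matrix

theorem Matrix.sq_opNorm_mul_opNorm_inv_lt {ι : Type*} [Fintype ι] [DecidableEq ι] [Nonempty ι]
    {T : Matrix ι ι ℂ} (habs : ∀ i j, ‖T i j‖ = 1) (hdet : 1 ≤ ‖T.det‖) :
    (opNorm T * opNorm T⁻¹) ^ 2 < 4 * (Fintype.card ι : ℝ) ^ Fintype.card ι := by
  set l := T.sqSingularValues
  have hprod : 1 ≤ ∏ i, l i := by
    rw [prod_sqSingularValues]
    nlinarith
  have hl : ∀ i, 0 < l i := fun i => (T.sqSingularValues_nonneg i).lt_of_ne' fun h => by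
    rw [Finset.prod_eq_zero (mem_univ i) h] at hprod
    linarith
  have hsum : ∑ i, l i = (Fintype.card ι : ℝ) ^ 2 := by
    simp [l, sum_sqSingularValues, habs, sq]
  have hT : IsUnit T.det := isUnit_iff_ne_zero.mpr (norm_pos_iff.mp (by linarith))
  obtain ⟨imax, himax⟩ := Finite.exists_max l
  obtain ⟨imin, himin⟩ := Finite.exists_min l
  calc (opNorm T * opNorm T⁻¹) ^ 2 = opNorm T ^ 2 * opNorm T⁻¹ ^ 2 := mul_pow _ _ _
    _ ≤ l imax * (l imin)⁻¹ :=
        mul_le_mul (T.sq_norm_toEuclideanCLM_le (hl imax).le himax)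
          (T.sq_norm_toEuclideanCLM_inv_le hT (hl imin) himin) (sq_nonneg _) (hl imax).le
    _ < 4 * (Fintype.card ι : ℝ) ^ Fintype.card ι :=
        div_lt_four_mul_card_pow hl hsum hprod imin imax

theorem stmt_14_general {G : Type*} [AddCommGroup G] [Fintype G] {n : ℕ} (hn : 1 < n)
    (E : Fin n → G)
    (B : Fin n → AddChar G ℂ)
    (hdet : (charMatrix E B).det ≠ 0) :
    ∃ k, 1 ≤ k ∧ k ≤ AddMonoid.exponent G ∧ Nat.gcd k (AddMonoid.exponent G) = 1 ∧
      1 ≤ ‖(charMatrix E (fun j => B j ^ k)).det‖ ∧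
      (opNorm (charMatrix E (fun j => B j ^ k)) *
          opNorm (charMatrix E (fun j => B j ^ k))⁻¹) ^ 2 < 4 * (n : ℝ) ^ n := by
  have hM := Nat.pos_of_ne_zero (AddMonoid.exponent_ne_zero_of_finite (G := G))
  obtain ⟨ζ, hζ⟩ : ∃ ζ : ℂ, IsPrimitiveRoot ζ (AddMonoid.exponent G) :=
    ⟨_, Complex.isPrimitiveRoot_exp _ hM.ne'⟩
  obtain ⟨P, hP⟩ := exists_det_charMatrix_pow_eq_aeval E B hζ
  have hP1 : aeval ζ P ≠ 0 := by
    rw [← pow_one ζ, hP]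
    simpa only [pow_one] using hdet
  obtain ⟨k, hk1, hkM, hkcop, hk⟩ := hζ.exists_one_le_norm_aeval_pow hM hP1
  rw [hP] at hk
  have : Nonempty (Fin n) := ⟨⟨0, by omega⟩⟩
  refine ⟨k, hk1, hkM, hkcop, hk, ?_⟩
  have := sq_opNorm_mul_opNorm_inv_lt (fun i j => AddChar.norm_apply (B j ^ k) (E i)) hk
  rwa [Fintype.card_fin] at this

theorem stmt_14 {G : Type*} [AddCommGroup G] [Fintype G] {n : ℕ} (hn : 1 < n)
    (E : Fin n → G) (hE : Function.Injective E)
    (B : Fin n → AddChar G ℂ) (hB : Function.Injective B)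
    (hdet : (charMatrix E B).det ≠ 0) :
    ∃ k, 1 ≤ k ∧ k ≤ AddMonoid.exponent G ∧ Nat.gcd k (AddMonoid.exponent G) = 1 ∧
      1 ≤ ‖(charMatrix E (fun j => B j ^ k)).det‖ ∧
      (opNorm (charMatrix E (fun j => B j ^ k)) *
          opNorm (charMatrix E (fun j => B j ^ k))⁻¹) ^ 2 < 4 * (n : ℝ) ^ n :=
  stmt_14_general hn E B hdet
end

section
/- Let E ⊆ G be a subset of a finite abelian group with |E| = n > 1. Then there exists B ⊆ Ĝ with |B| = n such that the Fourier matrix T(E,B) is invertible and its squared condition number is less than 4n^n. In particular, ρ(E) := min_B cond(T(E,B))² < 4n^n, a bound independent of G. -/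
/-! Orthogonality of characters gives `∑_B |det T(E,B)|² = n! |G|ⁿ`, the sum running over the
`|G|ⁿ` maps `B : Fin n → Ĝ`, so some `B` has `|det T|² ≥ n!`. The entries of `T` are unimodular,
so `‖T‖ ≤ n`, and the adjugate formula gives `‖T⁻¹‖ ≤ n (n-1)! / |det T| ≤ n! / |det T|`.
Hence `cond(T)² ≤ n² n!² / |det T|² ≤ n² n! ≤ 2 nⁿ`. -/

open Finset Matrix Equiv
open scoped Nat ComplexConjugate

lemma PiLp.norm_le_sqrt_card_mul {ι : Type*} [Fintype ι] {β : ι → Type*}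
    [∀ i, SeminormedAddCommGroup (β i)] {c : ℝ} (hc : 0 ≤ c) (v : PiLp 2 β)
    (h : ∀ i, ‖v i‖ ≤ c) : ‖v‖ ≤ √(Fintype.card ι) * c := by
  rw [PiLp.norm_eq_of_L2, ← Real.sqrt_sq hc, ← Real.sqrt_mul (Nat.cast_nonneg _)]
  refine Real.sqrt_le_sqrt ?_
  calc ∑ i, ‖v i‖ ^ 2 ≤ ∑ _i : ι, c ^ 2 := by gcongr with i; exact h i
    _ = _ := by simp

namespace Matrix

section Frobenius

attribute [local instance] Matrix.frobeniusNormedAddCommGroup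

variable {m n 𝕜 : Type*} [Fintype m] [Fintype n] [RCLike 𝕜]

lemma frobenius_norm_le_sqrt_card_mul {A : Matrix m n 𝕜} {c : ℝ} (hc : 0 ≤ c)
    (h : ∀ i j, ‖A i j‖ ≤ c) : ‖A‖ ≤ √(Fintype.card m) * (√(Fintype.card n) * c) :=
  PiLp.norm_le_sqrt_card_mul (by positivity) (WithLp.toLp 2 fun i => WithLp.toLp 2 (A i))
    fun i => PiLp.norm_le_sqrt_card_mul hc _ (h i)

lemma norm_toEuclideanCLM_le_frobenius_norm [DecidableEq n] (A : Matrix n n 𝕜) :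
    ‖toEuclideanCLM (𝕜 := 𝕜) A‖ ≤ ‖A‖ := by
  refine ContinuousLinearMap.opNorm_le_bound _ (norm_nonneg _) fun x => ?_
  calc ‖toEuclideanCLM (𝕜 := 𝕜) A x‖ = ‖replicateCol Unit (A *ᵥ x.ofLp)‖ := by
        rw [frobenius_norm_replicateCol, ← ofLp_toEuclideanCLM, WithLp.toLp_ofLp]
    _ = ‖A * replicateCol Unit x.ofLp‖ := by rw [replicateCol_mulVec]
    _ ≤ ‖A‖ * ‖replicateCol Unit x.ofLp‖ := frobenius_norm_mul _ _
    _ = ‖A‖ * ‖x‖ := by rw [frobenius_norm_replicateCol, WithLp.toLp_ofLp]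

lemma norm_toEuclideanCLM_le_card_mul [DecidableEq n] {A : Matrix n n 𝕜} {c : ℝ} (hc : 0 ≤ c)
    (h : ∀ i j, ‖A i j‖ ≤ c) : ‖toEuclideanCLM (𝕜 := 𝕜) A‖ ≤ Fintype.card n * c := by
  calc ‖toEuclideanCLM (𝕜 := 𝕜) A‖ ≤ ‖A‖ := norm_toEuclideanCLM_le_frobenius_norm A
    _ ≤ √(Fintype.card n) * (√(Fintype.card n) * c) := frobenius_norm_le_sqrt_card_mul hc h
    _ = Fintype.card n * c := by rw [← mul_assoc, Real.mul_self_sqrt (Nat.cast_nonneg _)]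

end Frobenius

variable {𝕜 : Type*} [NormedField 𝕜] {n : ℕ}

lemma norm_adjugate_apply_le {A : Matrix (Fin n) (Fin n) 𝕜} {c : ℝ} (h : ∀ i j, ‖A i j‖ ≤ c)
    (i j : Fin n) : ‖adjugate A i j‖ ≤ (n - 1)! * c ^ (n - 1) := by
  cases n with
  | zero => exact i.elim0
  | succ m =>
    rw [adjugate_fin_succ_eq_det_submatrix, norm_mul, norm_pow, norm_neg, norm_one, one_pow,
      one_mul]
    exact (det_le (A := A.submatrix j.succAbove i.succAbove)
      (abv := NormedField.toAbsoluteValue 𝕜) fun k l => h _ _).trans_eq (by simp)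

lemma norm_inv_apply_le {A : Matrix (Fin n) (Fin n) 𝕜} {c : ℝ} (h : ∀ i j, ‖A i j‖ ≤ c)
    (i j : Fin n) : ‖A⁻¹ i j‖ ≤ (n - 1)! * c ^ (n - 1) / ‖A.det‖ := by
  rw [inv_def, smul_apply, smul_eq_mul, norm_mul, Ring.inverse_eq_inv', norm_inv, inv_mul_eq_div]
  gcongr
  exact norm_adjugate_apply_le h i j

end Matrix

lemma AddChar.sum_prod_apply_eq_ite {G ι : Type*} [AddCommGroup G] [Fintype G] [DecidableEq G]
    [Fintype ι] [DecidableEq ι] (x : ι → G) :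
    ∑ ψ : ι → AddChar G ℂ, ∏ k, ψ k (x k)
      = if x = 0 then (Fintype.card G : ℂ) ^ Fintype.card ι else 0 := by
  rw [← Fintype.prod_sum fun k (ψ : AddChar G ℂ) => ψ (x k)]
  simp_rw [AddChar.sum_apply_eq_ite, Fintype.prod_ite_zero, funext_iff, prod_const, card_univ,
    Pi.zero_apply]

section CharMatrix

variable {G : Type*} [AddCommGroup G] {n : ℕ}

lemma det_charMatrix (E : Fin n → G) (B : Fin n → AddChar G ℂ) :
    (charMatrix E B).det = ∑ σ : Perm (Fin n), (Perm.sign σ : ℂ) * ∏ k, B k (E (σ k)) :=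
  det_apply' _

lemma det_charMatrix_mul_conj [Finite G] (E : Fin n → G) (B : Fin n → AddChar G ℂ) :
    (charMatrix E B).det * conj (charMatrix E B).det
      = ∑ σ : Perm (Fin n), ∑ τ : Perm (Fin n),
          (Perm.sign σ : ℂ) * Perm.sign τ * ∏ k, B k (E (σ k) - E (τ k)) := by
  simp_rw [det_charMatrix, map_sum, map_mul, map_prod, map_intCast,
    ← AddChar.map_neg_eq_conj (K := ℂ),
    sum_mul_sum, sub_eq_add_neg, AddChar.map_add_eq_mul, prod_mul_distrib]
  refine sum_congr rfl fun σ _ => sum_congr rfl fun τ _ => ?_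
  ring

lemma sum_norm_det_charMatrix_sq [Fintype G] {E : Fin n → G} (hE : Function.Injective E) :
    ∑ B : Fin n → AddChar G ℂ, ‖(charMatrix E B).det‖ ^ 2 = n ! * (Fintype.card G : ℝ) ^ n := by
  classical
  have hvanish (σ τ : Perm (Fin n)) : (fun k => E (σ k) - E (τ k)) = 0 ↔ τ = σ := by
    simp only [funext_iff, Pi.zero_apply, sub_eq_zero, hE.eq_iff, Equiv.ext_iff]
    exact forall_congr' fun k => eq_comm
  have key : ∑ B : Fin n → AddChar G ℂ, (charMatrix E B).det * conj (charMatrix E B).det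
      = n ! * (Fintype.card G : ℂ) ^ n := by
    simp_rw [det_charMatrix_mul_conj, sum_comm (γ := Fin n → AddChar G ℂ), ← mul_sum,
      AddChar.sum_prod_apply_eq_ite, hvanish, mul_ite, mul_zero, sum_ite_eq', mem_univ, if_true,
      Fintype.card_fin]
    simp [← Int.cast_mul, ← Units.val_mul, Int.units_mul_self, Fintype.card_perm]
  simp_rw [Complex.mul_conj'] at key
  exact_mod_cast key

lemma exists_factorial_le_norm_det_charMatrix_sq [Fintype G] {E : Fin n → G}
    (hE : Function.Injective E) : ∃ B, (n ! : ℝ) ≤ ‖(charMatrix E B).det‖ ^ 2 := by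
  obtain ⟨B, -, hB⟩ := exists_le_of_sum_le (univ_nonempty (α := Fin n → AddChar G ℂ))
    (f := fun _ => (n ! : ℝ)) (g := fun B => ‖(charMatrix E B).det‖ ^ 2) (by
      rw [sum_norm_det_charMatrix_sq hE, sum_const, card_univ, Fintype.card_fun, AddChar.card_eq,
        Fintype.card_fin, nsmul_eq_mul, mul_comm]
      push_cast; rfl)
  exact ⟨B, hB⟩

lemma injective_of_det_charMatrix_ne_zero {E : Fin n → G} {B : Fin n → AddChar G ℂ}
    (h : (charMatrix E B).det ≠ 0) : Function.Injective B := by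
  intro j j' hjj'
  by_contra hne
  exact h (det_zero_of_column_eq hne fun k => by simp [charMatrix, hjj'])

end CharMatrix

lemma Nat.mul_factorial_pred_le (n : ℕ) : n * (n - 1)! ≤ n ! := by
  cases n with
  | zero => simp
  | succ m => exact (Nat.mul_factorial_pred m.succ_ne_zero).le

/- `n² n! / nⁿ` is non-increasing from `n = 2` on, where it equals `2`: the induction step is
`(n+1)³ nⁿ ≤ (n+1)ⁿ⁺¹ n²`, i.e. `nⁿ⁻² ≤ (n+1)ⁿ⁻²`. -/
lemma Nat.sq_mul_factorial_le_two_mul_pow (n : ℕ) : n ^ 2 * n ! ≤ 2 * n ^ n := by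
  obtain hn | hn := lt_or_ge n 2
  · interval_cases n <;> decide
  induction n, hn using Nat.le_induction with
  | base => decide
  | succ m hm ih =>
    obtain ⟨p, rfl⟩ : ∃ p, m = p + 2 := ⟨m - 2, by omega⟩
    have hpow : (p + 2) ^ p ≤ (p + 3) ^ p := Nat.pow_le_pow_left (by omega) p
    have key : (p + 3) ^ 3 * (p + 2) ^ (p + 2) ≤ (p + 3) ^ (p + 3) * (p + 2) ^ 2 := by
      calc (p + 3) ^ 3 * (p + 2) ^ (p + 2) = (p + 3) ^ 3 * (p + 2) ^ p * (p + 2) ^ 2 := by ring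
        _ ≤ (p + 3) ^ 3 * (p + 3) ^ p * (p + 2) ^ 2 := by gcongr
        _ = (p + 3) ^ (p + 3) * (p + 2) ^ 2 := by ring
    refine Nat.le_of_mul_le_mul_right (c := (p + 2) ^ 2) ?_ (by positivity)
    calc (p + 2 + 1) ^ 2 * (p + 2 + 1)! * (p + 2) ^ 2
        = (p + 3) ^ 3 * ((p + 2) ^ 2 * (p + 2)!) := by rw [Nat.factorial_succ]; ring
      _ ≤ (p + 3) ^ 3 * (2 * (p + 2) ^ (p + 2)) := by gcongr
      _ ≤ 2 * ((p + 3) ^ (p + 3) * (p + 2) ^ 2) := by linarith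
      _ = 2 * (p + 2 + 1) ^ (p + 2 + 1) * (p + 2) ^ 2 := by ring

theorem stmt_15_general {G : Type*} [AddCommGroup G] [Fintype G] {n : ℕ}
    (E : Fin n → G) (hE : Function.Injective E) :
    ∃ B : Fin n → AddChar G ℂ, Function.Injective B ∧
      (charMatrix E B).det ≠ 0 ∧
      (opNorm (charMatrix E B) * opNorm (charMatrix E B)⁻¹) ^ 2 < 4 * (n : ℝ) ^ n := by
  obtain ⟨B, hB⟩ := exists_factorial_le_norm_det_charMatrix_sq hE
  set T := charMatrix E B
  set d := ‖T.det‖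
  have hdet : T.det ≠ 0 := fun h => by simp [d, h, Nat.factorial_ne_zero] at hB
  have hd : 0 < d := norm_pos_iff.mpr hdet
  have hentry (i j : Fin n) : ‖T i j‖ ≤ 1 := (AddChar.norm_apply _ _).le
  have hT : opNorm T ≤ n :=
    (norm_toEuclideanCLM_le_card_mul zero_le_one hentry).trans_eq (by simp)
  have hTinv : opNorm T⁻¹ ≤ n ! / d := by
    calc opNorm T⁻¹ ≤ n * ((n - 1)! / d) :=
          (norm_toEuclideanCLM_le_card_mul (by positivity) (norm_inv_apply_le hentry)).trans_eq
            (by simp [d])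
      _ ≤ n ! / d := by
          rw [← mul_div_assoc]
          gcongr
          exact_mod_cast Nat.mul_factorial_pred_le n
  have hpow : (0 : ℝ) < n ^ n := by exact_mod_cast Nat.pow_self_pos
  refine ⟨B, injective_of_det_charMatrix_ne_zero hdet, hdet, ?_⟩
  calc (opNorm T * opNorm T⁻¹) ^ 2 ≤ (n * (n ! / d)) ^ 2 := by
        gcongr
        · exact mul_nonneg (norm_nonneg _) (norm_nonneg _)
        · exact norm_nonneg _
    _ = n ^ 2 * (n ! ^ 2 / d ^ 2) := by ring
    _ ≤ n ^ 2 * (n ! ^ 2 / n !) := by gcongr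
    _ = n ^ 2 * n ! := by field_simp
    _ ≤ 2 * n ^ n := by exact_mod_cast Nat.sq_mul_factorial_le_two_mul_pow n
    _ < 4 * n ^ n := by linarith

theorem stmt_15 {G : Type*} [AddCommGroup G] [Fintype G] {n : ℕ} (hn : 1 < n)
    (E : Fin n → G) (hE : Function.Injective E) :
    ∃ B : Fin n → AddChar G ℂ, Function.Injective B ∧
      (charMatrix E B).det ≠ 0 ∧
      (opNorm (charMatrix E B) * opNorm (charMatrix E B)⁻¹) ^ 2 < 4 * (n : ℝ) ^ n :=
  stmt_15_general E hE
end

section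
/- Let G = H ⊕ K be finite abelian groups, E_1 ⊆ H, E = E_1 × K ⊆ G, and B ⊆ Ĝ with |B| = |E| such that the characters of B restricted to E are linearly independent (a basis pair). Then B has exactly |E_1| elements in each coset of Ĥ in Ĝ, where Ĝ ≅ Ĥ × K̂. -/
/-!
A character of `H × K` lying over `ψ ∈ K̂` is determined on `E₁ × K` by its values on
`E₁ × {0}`, since `χ (h, k) = χ (h, 0) * ψ k`; so at most `#E₁` characters of `B` lie over
each `ψ`. There are `#K̂ = #K` fibres and `#B = #E₁ * #K`, hence every fibre has exactly
`#E₁` elements.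
-/

open Finset

namespace AddChar

variable {H K R : Type*} [AddCommGroup H] [AddCommGroup K]

lemma apply_prod_eq_mul [Monoid R] (χ : AddChar (H × K) R) (h : H) (k : K) :
    χ (h, k) = χ (h, 0) * χ (0, k) := by
  rw [← map_add_eq_mul, Prod.mk_add_mk, add_zero, zero_add]

lemma sum_card_filter_inr_eq_card [CommMonoid R] [DecidableEq R] [Fintype K]
    [Fintype (AddChar K R)]
    (B : Finset (AddChar (H × K) R)) :
    ∑ ψ : AddChar K R, #{χ ∈ B | ∀ k : K, χ (0, k) = ψ k} = #B := by
  rw [card_eq_sum_card_fiberwise (f := fun χ => χ.compAddMonoidHom (AddMonoidHom.inr H K))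
    (t := univ) fun _ _ => mem_univ _]
  refine sum_congr rfl fun ψ _ => congrArg card (filter_congr fun χ _ => ?_)
  simp [AddChar.ext_iff]

lemma card_filter_inr_le_of_linearIndependent [CommRing R] [Nontrivial R] [DecidableEq R]
    [Fintype K] (E₁ : Finset H) (B : Finset (AddChar (H × K) R))
    (hindep : LinearIndependent R (fun χ : B => fun x : (E₁ ×ˢ (univ : Finset K)) => χ.1 x.1))
    (ψ : AddChar K R) :
    #{χ ∈ B | ∀ k : K, χ (0, k) = ψ k} ≤ #E₁ := by
  set F : Finset (AddChar (H × K) R) := {χ ∈ B | ∀ k : K, χ (0, k) = ψ k}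
  let fst : (E₁ ×ˢ (univ : Finset K)) → E₁ := fun x => ⟨x.1.1, (mem_product.1 x.2).1⟩
  let L := LinearMap.mulRight R (fun x : (E₁ ×ˢ (univ : Finset K)) => ψ x.1.2) ∘ₗ
    LinearMap.funLeft R R fst
  have hfactor : (fun χ : F => fun x : (E₁ ×ˢ (univ : Finset K)) => χ.1 x.1) =
      L ∘ fun χ : F => fun h : E₁ => χ.1 (h.1, 0) := by
    ext χ x
    have hψ := (mem_filter.1 χ.2).2 x.1.2
    simp [L, fst, LinearMap.funLeft, ← hψ, ← apply_prod_eq_mul]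
  have hindepF :
      LinearIndependent R (fun χ : F => fun x : (E₁ ×ˢ (univ : Finset K)) => χ.1 x.1) :=
    hindep.comp (fun χ : F => ⟨χ.1, (mem_filter.1 χ.2).1⟩)
      fun _ _ h => Subtype.ext (congrArg (fun χ : B => χ.1) h)
  rw [hfactor] at hindepF
  simpa using (hindepF.of_comp L).fintype_card_le_finrank

end AddChar

open scoped Classical in
theorem stmt_18_general {H K : Type*} [AddCommGroup H] [AddCommGroup K] [Fintype K]
    (E₁ : Finset H) (B : Finset (AddChar (H × K) ℂ))
    (hcard : B.card = (E₁ ×ˢ (Finset.univ : Finset K)).card)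
    (hindep : LinearIndependent ℂ
      (fun χ : B => fun x : (E₁ ×ˢ (Finset.univ : Finset K)) => χ.1 x.1)) :
    -- `B` has exactly `|E₁|` elements in each coset of `Ĥ` in `Ĝ ≅ Ĥ × K̂`,
    -- the coset associated to `ψ ∈ K̂` consisting of the characters restricting
    -- to `ψ` on `K`:
    ∀ ψ : AddChar K ℂ,
      (B.filter fun χ => ∀ k : K, χ ((0 : H), k) = ψ k).card = E₁.card := by
  have hle := AddChar.card_filter_inr_le_of_linearIndependent E₁ B hindep
  have hsum : ∑ ψ : AddChar K ℂ, #{χ ∈ B | ∀ k : K, χ (0, k) = ψ k} =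
      ∑ _ψ : AddChar K ℂ, #E₁ := by
    rw [AddChar.sum_card_filter_inr_eq_card, hcard, sum_const, card_univ, AddChar.card_eq,
      card_product, card_univ, smul_eq_mul, mul_comm]
  exact fun ψ => (sum_eq_sum_iff_of_le fun ψ _ => hle ψ).1 hsum ψ (mem_univ ψ)

open scoped Classical in
theorem stmt_18 {H K : Type*} [AddCommGroup H] [Fintype H] [AddCommGroup K] [Fintype K]
    (E₁ : Finset H) (B : Finset (AddChar (H × K) ℂ))
    (hcard : B.card = (E₁ ×ˢ (Finset.univ : Finset K)).card)
    (hindep : LinearIndependent ℂ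
      (fun χ : B => fun x : (E₁ ×ˢ (Finset.univ : Finset K)) => χ.1 x.1)) :
    -- `B` has exactly `|E₁|` elements in each coset of `Ĥ` in `Ĝ ≅ Ĥ × K̂`,
    -- the coset associated to `ψ ∈ K̂` consisting of the characters restricting
    -- to `ψ` on `K`:
    ∀ ψ : AddChar K ℂ,
      (B.filter fun χ => ∀ k : K, χ ((0 : H), k) = ψ k).card = E₁.card :=
  stmt_18_general E₁ B hcard hindep
end
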